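/- arXiv:1310.2722 — 9 statements merged into one kernel-verified Lean document; each statement's English description precedes it below -/
import Mathlib

section
/- Let G be a group, let g ≥ 4, and let a_1,…,a_{g−1}, y be elements of G satisfying: a_i a_j = a_j a_i for |i−j|>1; a_i a_{i+1} a_i = a_{i+1} a_i a_{i+1} for i=1,…,g−2; a_i y = y a_i for i=3,…,g−1; and a_1 y = y a_1^{−1}. Set M = a_1 a_2 ⋯ a_{g−1}, u_1 = a_1 y, u_2 = M u_1^{−1} M^{−1}, and u_3 = M u_2^{−1} M^{−1}. Then u_2 = a_1 a_2 (a_1 y^{−1}) a_2^{−1} a_1^{−1} and u_3 = a_2 a_3 a_1 a_2 (a_1 y) a_2^{−1} a_1^{−1} a_3^{−1} a_2^{−1}. -/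
/-!
Split `M = a₁ a₂ a₃ T` with `T = a₄ ⋯ a_{g-1}`. Since `T` commutes with `a₁`, `a₂` and `y`, and
`u₁`, `u₂` are words in these, conjugation by `M` acts on them as conjugation by `a₁ a₂ a₃`.
For `u₂` the factor `a₃` also drops out, as it commutes with `u₁`. For `u₃` the braid relations
give `a₁ P = P a₃` with `P = a₂ a₃ a₁ a₂`, and `a₃` commutes with `a₁ y`.
-/

section

variable {G : Type*} [Group G]

theorem mul_conj_eq_conj_of_commute {c t x : G} (h : Commute t x) :
    c * t * x * (c * t)⁻¹ = c * x * c⁻¹ :=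
  calc c * t * x * (c * t)⁻¹ = c * (t * x * t⁻¹) * c⁻¹ := by group
    _ = c * x * c⁻¹ := by rw [h.mul_inv_cancel]

theorem commute_prod_map_range' {a : ℕ → G} {x : G} {s n : ℕ}
    (h : ∀ i, s ≤ i → i < s + n → Commute (a i) x) :
    Commute ((List.range' s n).map a).prod x :=
  Commute.list_prod_left _ _ fun _ hx ↦ by
    obtain ⟨i, hi, rfl⟩ := List.mem_map.1 hx
    exact h i (List.mem_range'_1.1 hi).1 (List.mem_range'_1.1 hi).2

theorem prod_map_range'_one_eq {a : ℕ → G} {g : ℕ} (hg : 4 ≤ g) :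
    ((List.range' 1 (g - 1)).map a).prod
      = a 1 * a 2 * a 3 * ((List.range' 4 (g - 4)).map a).prod := by
  obtain ⟨n, rfl⟩ := Nat.exists_eq_add_of_le' hg
  simp [List.range'_succ, mul_assoc]

variable {x₁ x₂ x₃ y : G}

theorem mul_braid_eq_braid_mul (h₁₂ : x₁ * x₂ * x₁ = x₂ * x₁ * x₂)
    (h₂₃ : x₂ * x₃ * x₂ = x₃ * x₂ * x₃) (h₁₃ : x₁ * x₃ = x₃ * x₁) :
    x₁ * (x₂ * x₃ * x₁ * x₂) = x₂ * x₃ * x₁ * x₂ * x₃ :=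
  calc x₁ * (x₂ * x₃ * x₁ * x₂) = x₁ * x₂ * x₁ * (x₃ * x₂) := by
        simp only [mul_assoc, ← h₁₃]
    _ = x₂ * x₁ * (x₂ * x₃ * x₂) := by rw [h₁₂]; simp only [mul_assoc]
    _ = x₂ * (x₁ * x₃) * x₂ * x₃ := by rw [h₂₃]; simp only [mul_assoc]
    _ = x₂ * x₃ * x₁ * x₂ * x₃ := by rw [h₁₃]; simp only [mul_assoc]

theorem conj_inv_mul_eq_of_commute (h₁₃ : Commute x₃ x₁) (h₃y : Commute x₃ y)
    (h₁y : x₁ * y = y * x₁⁻¹) :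
    x₁ * x₂ * x₃ * (x₁ * y)⁻¹ * (x₁ * x₂ * x₃)⁻¹ = x₁ * x₂ * (x₁ * y⁻¹) * x₂⁻¹ * x₁⁻¹ := by
  rw [mul_conj_eq_conj_of_commute (h₁₃.mul_right h₃y).inv_right, h₁y, mul_inv_rev, inv_inv,
    mul_inv_rev]
  simp only [mul_assoc]

theorem conj_inv_conj_eq_of_braid (h₁₂ : x₁ * x₂ * x₁ = x₂ * x₁ * x₂)
    (h₂₃ : x₂ * x₃ * x₂ = x₃ * x₂ * x₃) (h₁₃ : Commute x₃ x₁) (h₃y : Commute x₃ y)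
    (h₁y : x₁ * y = y * x₁⁻¹) :
    x₁ * x₂ * x₃ * (x₁ * x₂ * (x₁ * y⁻¹) * x₂⁻¹ * x₁⁻¹)⁻¹ * (x₁ * x₂ * x₃)⁻¹
      = x₂ * x₃ * x₁ * x₂ * (x₁ * y) * x₂⁻¹ * x₁⁻¹ * x₃⁻¹ * x₂⁻¹ :=
  calc _ = x₁ * (x₂ * x₃ * x₁ * x₂) * (x₁ * y) * (x₁ * (x₂ * x₃ * x₁ * x₂))⁻¹ := by
        rw [← inv_inv (x₁ * y), h₁y]
        group
    _ = x₂ * x₃ * x₁ * x₂ * x₃ * (x₁ * y) * (x₂ * x₃ * x₁ * x₂ * x₃)⁻¹ := by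
        rw [mul_braid_eq_braid_mul h₁₂ h₂₃ h₁₃.eq.symm]
    _ = x₂ * x₃ * x₁ * x₂ * (x₁ * y) * (x₂ * x₃ * x₁ * x₂)⁻¹ :=
        mul_conj_eq_conj_of_commute (h₁₃.mul_right h₃y)
    _ = _ := by group

end

/-- computation of `u₂` and `u₃` from `u₁ = a₁ y` and
`u_{i+1} = M u_i⁻¹ M⁻¹`, where `M = a₁ a₂ ⋯ a_{g-1}`. -/
theorem stmt_6 {G : Type*} [Group G] (g : ℕ) (hg : 4 ≤ g) (a : ℕ → G) (y : G)
    (hA1 : ∀ i j, 1 ≤ i → j ≤ g - 1 → i + 1 < j → a i * a j = a j * a i)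
    (hA2 : ∀ i, 1 ≤ i → i ≤ g - 2 → a i * a (i + 1) * a i = a (i + 1) * a i * a (i + 1))
    (hC1' : ∀ i, 3 ≤ i → i ≤ g - 1 → a i * y = y * a i)
    (hC4' : a 1 * y = y * (a 1)⁻¹)
    (M u1 u2 u3 : G)
    (hM : M = ((List.range' 1 (g - 1)).map a).prod)
    (hu1 : u1 = a 1 * y)
    (hu2 : u2 = M * u1⁻¹ * M⁻¹)
    (hu3 : u3 = M * u2⁻¹ * M⁻¹) :
    u2 = a 1 * a 2 * (a 1 * y⁻¹) * (a 2)⁻¹ * (a 1)⁻¹ ∧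
    u3 = a 2 * a 3 * a 1 * a 2 * (a 1 * y) * (a 2)⁻¹ * (a 1)⁻¹ * (a 3)⁻¹ * (a 2)⁻¹ := by
  set T := ((List.range' 4 (g - 4)).map a).prod
  have hconj (x : G) (hx : Commute T x) :
      M * x * M⁻¹ = a 1 * a 2 * a 3 * x * (a 1 * a 2 * a 3)⁻¹ := by
    rw [hM, prod_map_range'_one_eq hg]
    exact mul_conj_eq_conj_of_commute hx
  have hT₁ : Commute T (a 1) :=
    commute_prod_map_range' fun i _ _ ↦ (hA1 1 i le_rfl (by omega) (by omega)).symm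
  have hT₂ : Commute T (a 2) :=
    commute_prod_map_range' fun i _ _ ↦ (hA1 2 i (by omega) (by omega) (by omega)).symm
  have hTy : Commute T y :=
    commute_prod_map_range' fun i _ _ ↦ hC1' i (by omega) (by omega)
  have h₁₃ : Commute (a 3) (a 1) := (hA1 1 3 le_rfl (by omega) (by omega)).symm
  have h₃y : Commute (a 3) y := hC1' 3 le_rfl (by omega)
  have hu2' : u2 = a 1 * a 2 * (a 1 * y⁻¹) * (a 2)⁻¹ * (a 1)⁻¹ := by
    rw [hu2, hu1, hconj _ (hT₁.mul_right hTy).inv_right]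
    exact conj_inv_mul_eq_of_commute h₁₃ h₃y hC4'
  refine ⟨hu2', ?_⟩
  have hTu2 : Commute T u2⁻¹ := hu2' ▸ ((((hT₁.mul_right hT₂).mul_right
    (hT₁.mul_right hTy.inv_right)).mul_right hT₂.inv_right).mul_right hT₁.inv_right).inv_right
  rw [hu3, hconj _ hTu2, hu2']
  exact conj_inv_conj_eq_of_braid (hA2 1 le_rfl (by omega)) (hA2 2 (by omega) (by omega))
    h₁₃ h₃y hC4'
end

section
/- Let G be a group and let a_1, a_2, a_3, y be elements of G satisfying: a_1 a_3 = a_3 a_1; a_1 a_2 a_1 = a_2 a_1 a_2; a_2 a_3 a_2 = a_3 a_2 a_3; a_3 y = y a_3; and a_1 y = y a_1^{−1}. Set u_1 = a_1 y and u_3 = a_2 a_3 a_1 a_2 (a_1 y) a_2^{−1} a_1^{−1} a_3^{−1} a_2^{−1}. Then u_1 u_3 = u_3 u_1 if and only if y commutes with a_2 a_3 a_1 a_2 y a_2^{−1} a_1^{−1} a_3^{−1} a_2^{−1}, i.e. if and only if relation (B1') holds: y(a_2a_3a_1a_2 y a_2^{−1}a_1^{−1}a_3^{−1}a_2^{−1})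 = (a_2a_3a_1a_2 y a_2^{−1}a_1^{−1}a_3^{−1}a_2^{−1})y. -/
/-!
Put `w = a₂ a₃ a₁ a₂`. The braid relations give `w a₁ = a₃ w` and `a₁ w = w a₃`, so conjugation
by `w` exchanges `a₁` and `a₃`. Hence `u₃ = a₃ z` with `z = w y w⁻¹`, and `z` commutes with `a₁`
because `y` commutes with `a₃`. Moving the commuting letters `a₁`, `a₃` to the front of both
`u₁ u₃ = a₁ y a₃ z` and `u₃ u₁ = a₃ z a₁ y` leaves `a₁ a₃ · y z` and `a₁ a₃ · z y`.
-/

section Braid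

variable {G : Type*} [Group G] {a b c : G}

theorem braid_word_mul_left (hab : a * b * a = b * a * b) (hbc : b * c * b = c * b * c) :
    b * c * a * b * a = c * (b * c * a * b) :=
  calc b * c * a * b * a = b * c * (a * b * a) := by group
    _ = b * c * b * a * b := by rw [hab]; group
    _ = c * b * c * a * b := by rw [hbc]
    _ = c * (b * c * a * b) := by group

theorem braid_word_mul_right (hac : a * c = c * a) (hab : a * b * a = b * a * b)
    (hbc : b * c * b = c * b * c) : a * (b * c * a * b) = b * c * a * b * c :=
  calc a * (b * c * a * b) = a * b * (c * a) * b := by group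
    _ = a * b * a * c * b := by rw [← hac]; group
    _ = b * a * (b * c * b) := by rw [hab]; group
    _ = b * (a * c) * b * c := by rw [hbc]; group
    _ = b * c * a * b * c := by rw [hac]; group

end Braid

theorem Commute.mul_mul_iff {G : Type*} [Group G] {a c y z : G} (hac : Commute a c)
    (hcy : Commute c y) (haz : Commute a z) :
    Commute (a * y) (c * z) ↔ Commute y z := by
  have hlhs : a * y * (c * z) = a * c * (y * z) := by
    rw [mul_assoc a, ← mul_assoc y, ← hcy.eq]; group
  have hrhs : c * z * (a * y) = a * c * (z * y) := by
    rw [mul_assoc c, ← mul_assoc z, ← haz.eq, hac.eq]; group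
  rw [Commute, SemiconjBy, hlhs, hrhs, mul_left_cancel_iff]
  rfl

theorem stmt_9_general {G : Type*} [Group G] (a1 a2 a3 y : G)
    (h13 : a1 * a3 = a3 * a1)
    (h12 : a1 * a2 * a1 = a2 * a1 * a2)
    (h23 : a2 * a3 * a2 = a3 * a2 * a3)
    (h3y : a3 * y = y * a3)
    (u1 u3 : G)
    (hu1 : u1 = a1 * y)
    (hu3 : u3 = a2 * a3 * a1 * a2 * (a1 * y) * a2⁻¹ * a1⁻¹ * a3⁻¹ * a2⁻¹) :
    (u1 * u3 = u3 * u1 ↔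
      y * (a2 * a3 * a1 * a2 * y * a2⁻¹ * a1⁻¹ * a3⁻¹ * a2⁻¹) =
        (a2 * a3 * a1 * a2 * y * a2⁻¹ * a1⁻¹ * a3⁻¹ * a2⁻¹) * y) := by
  have hconj (x : G) : a2 * a3 * a1 * a2 * x * a2⁻¹ * a1⁻¹ * a3⁻¹ * a2⁻¹ =
      a2 * a3 * a1 * a2 * x * (a2 * a3 * a1 * a2)⁻¹ := by group
  set w := a2 * a3 * a1 * a2
  have hw1 : w * a1 = a3 * w := braid_word_mul_left h12 h23
  have hw3 : a1 * w = w * a3 := braid_word_mul_right h13 h12 h23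
  have hu3' : u3 = a3 * (w * y * w⁻¹) := by
    rw [hu3, hconj, ← mul_assoc w, hw1]; group
  have hz : Commute a1 (w * y * w⁻¹) := by
    rw [show a1 = w * a3 * w⁻¹ by rw [← hw3]; group]
    exact Commute.conj h3y w
  rw [hconj, hu1, hu3']
  exact Commute.mul_mul_iff h13 h3y hz

/-- after substituting `u₁ = a₁ y` and
`u₃ = a₂ a₃ a₁ a₂ (a₁ y) a₂⁻¹ a₁⁻¹ a₃⁻¹ a₂⁻¹`, the relation `u₁ u₃ = u₃ u₁` is
equivalent to relation (B1'). -/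
theorem stmt_9 {G : Type*} [Group G] (a1 a2 a3 y : G)
    (h13 : a1 * a3 = a3 * a1)
    (h12 : a1 * a2 * a1 = a2 * a1 * a2)
    (h23 : a2 * a3 * a2 = a3 * a2 * a3)
    (h3y : a3 * y = y * a3)
    (h1y : a1 * y = y * a1⁻¹)
    (u1 u3 : G)
    (hu1 : u1 = a1 * y)
    (hu3 : u3 = a2 * a3 * a1 * a2 * (a1 * y) * a2⁻¹ * a1⁻¹ * a3⁻¹ * a2⁻¹) :
    (u1 * u3 = u3 * u1 ↔
      y * (a2 * a3 * a1 * a2 * y * a2⁻¹ * a1⁻¹ * a3⁻¹ * a2⁻¹) =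
        (a2 * a3 * a1 * a2 * y * a2⁻¹ * a1⁻¹ * a3⁻¹ * a2⁻¹) * y) :=
  stmt_9_general a1 a2 a3 y h13 h12 h23 h3y u1 u3 hu1 hu3
end

section
/- Let G be a group and let a_1, a_2, y be elements of G satisfying a_1 a_2 a_1 = a_2 a_1 a_2 and a_1 y = y a_1^{−1}. Set u_1 = a_1 y and u_2 = a_1 a_2 (a_1 y^{−1}) a_2^{−1} a_1^{−1}. Then the braid relation u_1 u_2 u_1 = u_2 u_1 u_2 holds if and only if relation (B2') holds: y(a_2 a_1 y^{−1} a_2^{−1} y a_1 a_2)y = a_1(a_2 a_1 y^{−1} a_2^{−1} y a_1 a_2)a_1. -/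
/-!
With `W = a₂ a₁ y⁻¹ a₂⁻¹ y a₁ a₂` and `c = a₁ a₂ y`, the word `u₂ u₁ u₂` is freely equal to
`a₁ W a₁ c⁻¹`, while `u₁ u₂ u₁` equals `y W y c⁻¹` once `y a₁ = a₁⁻¹ y` is used to move `a₁`
across `y`. Cancelling `c⁻¹` turns the braid relation into (B2').
-/

section BraidSubstitution

variable {G : Type*} [Group G] {a1 a2 y : G}

theorem mul_eq_inv_mul_of_mul_eq_mul_inv (h : a1 * y = y * a1⁻¹) : y * a1 = a1⁻¹ * y := by
  calc y * a1 = a1⁻¹ * (a1 * y) * a1 := by group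
    _ = a1⁻¹ * y := by rw [h]; group

theorem braid_word_u1_u2_u1 (h1y : a1 * y = y * a1⁻¹) :
    a1 * y * (a1 * a2 * (a1 * y⁻¹) * a2⁻¹ * a1⁻¹) * (a1 * y) =
      y * (a2 * a1 * y⁻¹ * a2⁻¹ * y * a1 * a2) * y * (a1 * a2 * y)⁻¹ := by
  have hy1 := mul_eq_inv_mul_of_mul_eq_mul_inv h1y
  calc a1 * y * (a1 * a2 * (a1 * y⁻¹) * a2⁻¹ * a1⁻¹) * (a1 * y)
      = a1 * (y * a1) * a2 * a1 * y⁻¹ * a2⁻¹ * y := by group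
    _ = y * a2 * a1 * y⁻¹ * a2⁻¹ * y := by rw [hy1]; group
    _ = y * (a2 * a1 * y⁻¹ * a2⁻¹ * y * a1 * a2) * y * (a1 * a2 * y)⁻¹ := by group

theorem braid_word_u2_u1_u2 :
    a1 * a2 * (a1 * y⁻¹) * a2⁻¹ * a1⁻¹ * (a1 * y) * (a1 * a2 * (a1 * y⁻¹) * a2⁻¹ * a1⁻¹) =
      a1 * (a2 * a1 * y⁻¹ * a2⁻¹ * y * a1 * a2) * a1 * (a1 * a2 * y)⁻¹ := by
  group

end BraidSubstitution

theorem stmt_10_general {G : Type*} [Group G] (a1 a2 y : G)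
    (h1y : a1 * y = y * a1⁻¹)
    (u1 u2 : G)
    (hu1 : u1 = a1 * y)
    (hu2 : u2 = a1 * a2 * (a1 * y⁻¹) * a2⁻¹ * a1⁻¹) :
    (u1 * u2 * u1 = u2 * u1 * u2 ↔
      y * (a2 * a1 * y⁻¹ * a2⁻¹ * y * a1 * a2) * y =
        a1 * (a2 * a1 * y⁻¹ * a2⁻¹ * y * a1 * a2) * a1) := by
  subst hu1 hu2
  rw [braid_word_u1_u2_u1 h1y, braid_word_u2_u1_u2]
  exact mul_left_inj _

/-- after substituting `u₁ = a₁ y` and `u₂ = a₁ a₂ (a₁ y⁻¹) a₂⁻¹ a₁⁻¹`,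
the braid relation `u₁ u₂ u₁ = u₂ u₁ u₂` is equivalent to relation (B2'). -/
theorem stmt_10 {G : Type*} [Group G] (a1 a2 y : G)
    (h12 : a1 * a2 * a1 = a2 * a1 * a2)
    (h1y : a1 * y = y * a1⁻¹)
    (u1 u2 : G)
    (hu1 : u1 = a1 * y)
    (hu2 : u2 = a1 * a2 * (a1 * y⁻¹) * a2⁻¹ * a1⁻¹) :
    (u1 * u2 * u1 = u2 * u1 * u2 ↔
      y * (a2 * a1 * y⁻¹ * a2⁻¹ * y * a1 * a2) * y =
        a1 * (a2 * a1 * y⁻¹ * a2⁻¹ * y * a1 * a2) * a1) :=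
  stmt_10_general a1 a2 y h1y u1 u2 hu1 hu2
end

section
/- Let G be a group, let g ≥ 4, and let a_1,…,a_{g−1}, u_1 be elements of G satisfying: a_i a_j = a_j a_i for |i−j|>1; a_i a_{i+1} a_i = a_{i+1} a_i a_{i+1} for i=1,…,g−2; and u_1 a_i = a_i u_1 for i=3,…,g−1. Set M = a_1 a_2 ⋯ a_{g−1}. Then for every k with 2 ≤ k ≤ g−2, the element a_1 commutes with M^k u_1 M^{−k} if and only if a_1 commutes with M^2 u_1 M^{−2}. -/
/-!
Conjugation by `M = a₁ ⋯ a_{g-1}` shifts the generators, `M aᵢ M⁻¹ = a_{i+1}` for `i ≤ g - 2`: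
write `M = P (aᵢ a_{i+1}) S` with `S` commuting with `aᵢ` and `P` with `a_{i+1}`, and use
`(aᵢ a_{i+1}) aᵢ (aᵢ a_{i+1})⁻¹ = a_{i+1}`. Likewise, as `u₁` commutes with `a₃, …, a_{g-1}`,
`M u₁ M⁻¹ = (a₁ a₂) u₁ (a₁ a₂)⁻¹`. By induction, `Mʲ u₁ M⁻ʲ = w u₁ w⁻¹` with `w` in the subgroup
generated by `a₁, …, a_{j+1}`, so `Mᵏ u₁ M⁻ᵏ = v (M² u₁ M⁻²) v⁻¹` where `v = M² w M⁻²` lies in the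
subgroup generated by `a₃, …, a_{k+1}`. For `k ≤ g - 2` all of these commute with `a₁`, and
conjugating by an element commuting with `a₁` does not change whether `a₁` commutes.
-/

open Subgroup Set

section
variable {G : Type*} [Group G] {a : ℕ → G} {n : ℕ}

lemma MulAut.conj_mul_apply_of_braid {x y : G} (h : x * y * x = y * x * y) :
    MulAut.conj (x * y) x = y := by
  rw [MulAut.conj_apply, mul_inv_eq_iff_eq_mul, h, mul_assoc]

lemma MulAut.conj_conj_apply (g w u : G) :
    MulAut.conj g (MulAut.conj w u) = MulAut.conj (MulAut.conj g w) (MulAut.conj g u) := by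
  simp only [MulAut.conj_apply]
  group

lemma Commute.commute_conj_iff {x v z : G} (hv : Commute x v) :
    Commute x (MulAut.conj v z) ↔ Commute x z := by
  rw [MulAut.conj_apply]
  conv_lhs => rw [← hv.symm.mul_inv_cancel]
  exact Commute.conj_iff v

lemma prod_range'_eq_mul_mul_mul (p r : ℕ) :
    ((List.range' 1 (p + 2 + r)).map a).prod =
      ((List.range' 1 p).map a).prod * (a (p + 1) * a (p + 2)) *
        ((List.range' (p + 3) r).map a).prod := by
  rw [← List.range'_append, ← List.range'_append, one_mul, one_mul,
    show 1 + (p + 2) = p + 3 by omega]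
  simp [List.range', mul_assoc, add_comm 1 p]

structure BraidRelations (a : ℕ → G) (n : ℕ) : Prop where
  commute : ∀ i j, 1 ≤ i → j ≤ n → i + 1 < j → Commute (a i) (a j)
  braid : ∀ i, 1 ≤ i → i + 1 ≤ n → a i * a (i + 1) * a i = a (i + 1) * a i * a (i + 1)

lemma conj_prod_range'_of_commute {u : G} (hn : 2 ≤ n)
    (hu : ∀ i, 3 ≤ i → i ≤ n → Commute u (a i)) :
    MulAut.conj ((List.range' 1 n).map a).prod u = MulAut.conj (a 1 * a 2) u := by
  obtain ⟨r, rfl⟩ : ∃ r, n = 0 + 2 + r := ⟨n - 2, by omega⟩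
  have hS : Commute u ((List.range' 3 r).map a).prod := by
    refine Commute.list_prod_right _ _ fun x hx => ?_
    obtain ⟨j, hj, rfl⟩ := List.mem_map.1 hx
    rw [List.mem_range'_1] at hj
    exact hu j (by omega) (by omega)
  rw [prod_range'_eq_mul_mul_mul, map_mul, MulAut.mul_apply, MulAut.conj_apply _ u,
    hS.symm.mul_inv_cancel]
  simp

namespace BraidRelations

lemma conj_prod_range'_apply (ha : BraidRelations a n) {i : ℕ} (hi : 1 ≤ i) (hin : i + 1 ≤ n) :
    MulAut.conj ((List.range' 1 n).map a).prod (a i) = a (i + 1) := by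
  obtain ⟨p, rfl⟩ : ∃ p, i = p + 1 := ⟨i - 1, by omega⟩
  obtain ⟨r, rfl⟩ : ∃ r, n = p + 2 + r := ⟨n - p - 2, by omega⟩
  have hP : Commute ((List.range' 1 p).map a).prod (a (p + 2)) := by
    refine Commute.list_prod_left _ _ fun x hx => ?_
    obtain ⟨j, hj, rfl⟩ := List.mem_map.1 hx
    rw [List.mem_range'_1] at hj
    exact ha.commute j (p + 2) (by omega) (by omega) (by omega)
  have hS : Commute (a (p + 1)) ((List.range' (p + 3) r).map a).prod := by
    refine Commute.list_prod_right _ _ fun x hx => ?_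
    obtain ⟨j, hj, rfl⟩ := List.mem_map.1 hx
    rw [List.mem_range'_1] at hj
    exact ha.commute (p + 1) j (by omega) (by omega) (by omega)
  rw [prod_range'_eq_mul_mul_mul, map_mul, map_mul, MulAut.mul_apply, MulAut.mul_apply,
    MulAut.conj_apply _ (a (p + 1)), hS.symm.mul_inv_cancel,
    MulAut.conj_mul_apply_of_braid (ha.braid (p + 1) (by omega) (by omega)),
    MulAut.conj_apply, hP.mul_inv_cancel]

lemma conj_prod_range'_mem_closure (ha : BraidRelations a n) {p q : ℕ} (hp : 1 ≤ p)
    (hq : q + 1 ≤ n) {x : G} (hx : x ∈ closure (a '' Icc p q)) :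
    MulAut.conj ((List.range' 1 n).map a).prod x ∈ closure (a '' Icc (p + 1) (q + 1)) := by
  have hle : closure (a '' Icc p q) ≤ (closure (a '' Icc (p + 1) (q + 1))).comap
      (MulAut.conj ((List.range' 1 n).map a).prod).toMonoidHom := by
    rw [closure_le]
    rintro _ ⟨i, ⟨hpi, hiq⟩, rfl⟩
    rw [SetLike.mem_coe, mem_comap, MulEquiv.coe_toMonoidHom,
      ha.conj_prod_range'_apply (by omega) (by omega)]
    exact subset_closure ⟨i + 1, ⟨by omega, by omega⟩, rfl⟩
  exact hle hx

lemma commute_of_mem_closure (ha : BraidRelations a n) {i p q : ℕ} (hi : 1 ≤ i)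
    (hip : i + 1 < p) (hq : q ≤ n) {x : G} (hx : x ∈ closure (a '' Icc p q)) :
    Commute (a i) x := by
  have hle : closure (a '' Icc p q) ≤ Subgroup.centralizer {a i} := by
    rw [closure_le]
    rintro _ ⟨j, ⟨hpj, hjq⟩, rfl⟩ _ rfl
    exact ha.commute i j hi (by omega) (by omega)
  exact Subgroup.mem_centralizer_iff.1 (hle hx) (a i) rfl

lemma exists_conj_pow_eq (ha : BraidRelations a n) {u : G}
    (hu : ∀ i, 3 ≤ i → i ≤ n → Commute u (a i)) {j : ℕ} (hj : j + 2 ≤ n) :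
    ∃ w ∈ closure (a '' Icc 1 (j + 1)),
      MulAut.conj (((List.range' 1 n).map a).prod ^ j) u = MulAut.conj w u := by
  induction j with
  | zero => exact ⟨1, one_mem _, by rw [pow_zero]⟩
  | succ j ih =>
    obtain ⟨w, hw, hconj⟩ := ih (by omega)
    refine ⟨MulAut.conj ((List.range' 1 n).map a).prod w * (a 1 * a 2),
      mul_mem ?_ (mul_mem ?_ ?_), ?_⟩
    · exact closure_mono (image_mono (Icc_subset_Icc_left (by omega)))
        (ha.conj_prod_range'_mem_closure (by omega) (by omega) hw)
    · exact subset_closure ⟨1, ⟨le_rfl, by omega⟩, rfl⟩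
    · exact subset_closure ⟨2, ⟨by omega, by omega⟩, rfl⟩
    · rw [pow_succ', map_mul, MulAut.mul_apply, hconj, MulAut.conj_conj_apply,
        conj_prod_range'_of_commute (by omega) hu, ← MulAut.mul_apply, ← map_mul]

end BraidRelations

end

theorem stmt_11_general {G : Type*} [Group G] (g : ℕ) (a : ℕ → G) (u1 : G)
    (hA1 : ∀ i j, 1 ≤ i → j ≤ g - 1 → i + 1 < j → a i * a j = a j * a i)
    (hA2 : ∀ i, 1 ≤ i → i ≤ g - 2 → a i * a (i + 1) * a i = a (i + 1) * a i * a (i + 1))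
    (hC1' : ∀ i, 3 ≤ i → i ≤ g - 1 → u1 * a i = a i * u1)
    (M : G) (hM : M = ((List.range' 1 (g - 1)).map a).prod) :
    ∀ k, 2 ≤ k → k ≤ g - 2 →
      (a 1 * (M ^ k * u1 * (M ^ k)⁻¹) = (M ^ k * u1 * (M ^ k)⁻¹) * a 1 ↔
        a 1 * (M ^ 2 * u1 * (M ^ 2)⁻¹) = (M ^ 2 * u1 * (M ^ 2)⁻¹) * a 1) := by
  have ha : BraidRelations a (g - 1) := ⟨hA1, fun i hi hin => hA2 i hi (by omega)⟩
  subst hM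
  intro k hk2 hkg
  obtain ⟨j, rfl⟩ : ∃ j, k = j + 2 := ⟨k - 2, by omega⟩
  obtain ⟨w, hw, hconj⟩ := ha.exists_conj_pow_eq hC1' (j := j) (by omega)
  set M := ((List.range' 1 (g - 1)).map a).prod
  have hv : MulAut.conj (M ^ 2) w ∈ closure (a '' Icc 3 (j + 3)) := by
    rw [pow_two, map_mul, MulAut.mul_apply]
    exact ha.conj_prod_range'_mem_closure (by omega) (by omega)
      (ha.conj_prod_range'_mem_closure (by omega) (by omega) hw)
  simp only [← MulAut.conj_apply]
  rw [add_comm j 2, pow_add, map_mul, MulAut.mul_apply, hconj, MulAut.conj_conj_apply]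
  exact (ha.commute_of_mem_closure le_rfl (by omega) (by omega) hv).commute_conj_iff

/-- the commutation of `a₁` with `Mᵏ u₁ M⁻ᵏ` reduces to the case `k = 2`. -/
theorem stmt_11 {G : Type*} [Group G] (g : ℕ) (hg : 4 ≤ g) (a : ℕ → G) (u1 : G)
    (hA1 : ∀ i j, 1 ≤ i → j ≤ g - 1 → i + 1 < j → a i * a j = a j * a i)
    (hA2 : ∀ i, 1 ≤ i → i ≤ g - 2 → a i * a (i + 1) * a i = a (i + 1) * a i * a (i + 1))
    (hC1' : ∀ i, 3 ≤ i → i ≤ g - 1 → u1 * a i = a i * u1)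
    (M : G) (hM : M = ((List.range' 1 (g - 1)).map a).prod) :
    ∀ k, 2 ≤ k → k ≤ g - 2 →
      (a 1 * (M ^ k * u1 * (M ^ k)⁻¹) = (M ^ k * u1 * (M ^ k)⁻¹) * a 1 ↔
        a 1 * (M ^ 2 * u1 * (M ^ 2)⁻¹) = (M ^ 2 * u1 * (M ^ 2)⁻¹) * a 1) :=
  stmt_11_general g a u1 hA1 hA2 hC1' M hM
end

section
/- Let G be a group and let a_1, a_2, a_3, y be elements of G satisfying a_1 a_3 = a_3 a_1, a_1 a_2 a_1 = a_2 a_1 a_2, and a_2 a_3 a_2 = a_3 a_2 a_3. Set u_3 = a_2 a_3 a_1 a_2 (a_1 y) a_2^{−1} a_1^{−1} a_3^{−1} a_2^{−1}. Then a_1 u_3 = u_3 a_1 if and only if a_3 y = y a_3. -/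
/-! Conjugation by `w = a₂ a₃ a₁ a₂` carries `a₃` to `a₁` (a braid-relation computation), and
`u₃ = w (a₁ y) w⁻¹`. Hence `a₁` commutes with `u₃` iff `a₃` commutes with `a₁ y`, i.e. (as `a₁`
and `a₃` commute) with `y`. -/

theorem Commute.mul_right_iff_of_commute {M : Type*} [LeftCancelMonoid M] {a b c : M}
    (hab : Commute a b) : Commute a (b * c) ↔ Commute a c := by
  rw [Commute, SemiconjBy, ← mul_assoc, hab.eq, mul_assoc, mul_assoc, mul_left_cancel_iff]
  rfl

theorem commute_conj_iff_of_mul_eq {G : Type*} [Group G] {a b w : G} (x : G)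
    (h : a * w = w * b) : Commute a (w * x * w⁻¹) ↔ Commute b x := by
  rw [eq_mul_inv_of_mul_eq h, Commute.conj_iff]

theorem mul_braid_word_eq_braid_word_mul {G : Type*} [Group G] {a1 a2 a3 : G}
    (h13 : a1 * a3 = a3 * a1) (h12 : a1 * a2 * a1 = a2 * a1 * a2)
    (h23 : a2 * a3 * a2 = a3 * a2 * a3) :
    a1 * (a2 * a3 * a1 * a2) = a2 * a3 * a1 * a2 * a3 :=
  calc a1 * (a2 * a3 * a1 * a2)
      = a1 * a2 * (a3 * a1) * a2 := by group
    _ = (a1 * a2 * a1) * a3 * a2 := by rw [← h13]; group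
    _ = a2 * a1 * (a2 * a3 * a2) := by rw [h12]; group
    _ = a2 * (a1 * a3) * a2 * a3 := by rw [h23]; group
    _ = a2 * a3 * a1 * a2 * a3 := by rw [h13]; group

/-- after substitution, the relation `a₁ u₃ = u₃ a₁` is equivalent to
the commutation `a₃ y = y a₃`. -/
theorem stmt_12 {G : Type*} [Group G] (a1 a2 a3 y : G)
    (h13 : a1 * a3 = a3 * a1)
    (h12 : a1 * a2 * a1 = a2 * a1 * a2)
    (h23 : a2 * a3 * a2 = a3 * a2 * a3)
    (u3 : G)
    (hu3 : u3 = a2 * a3 * a1 * a2 * (a1 * y) * a2⁻¹ * a1⁻¹ * a3⁻¹ * a2⁻¹) :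
    (a1 * u3 = u3 * a1 ↔ a3 * y = y * a3) := by
  have hu3_conj : u3 = (a2 * a3 * a1 * a2) * (a1 * y) * (a2 * a3 * a1 * a2)⁻¹ := by
    rw [hu3]; group
  rw [hu3_conj]
  exact (commute_conj_iff_of_mul_eq _ (mul_braid_word_eq_braid_word_mul h13 h12 h23)).trans
    (Commute.mul_right_iff_of_commute h13.symm)
end

section
/- Let G be a group, let g ≥ 3, and let a_1,…,a_{g−1}, y be elements of G satisfying: a_i a_j = a_j a_i for |i−j|>1; a_i a_{i+1} a_i = a_{i+1} a_i a_{i+1} for i=1,…,g−2; a_i y = y a_i for i=3,…,g−1; and a_1 y = y a_1^{−1}. Set M = a_1⋯a_{g−1}, u_1 = a_1 y, and u_i = M^{i−1} u_1^{(−1)^{i−1}} M^{−(i−1)} for i = 2,…,g−1. Then for each i = 1,…,g−2, the relation (C2) a_i u_{i+1} u_i = u_{i+1} u_i a_{i+1} holds if and only if relation (C2') holds: a_2 (y a_2 y^{−1}) = (y a_2 y^{−1}) a_2. -/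
/-!
Conjugation by `M = a₁ ⋯ a_{g-1}` shifts `aⱼ ↦ aⱼ₊₁` (braid and far-commutation relations), so
(C2) for index `i` is the `M^(i-1)`-conjugate of the relation
`a₁ (M u₁^{±1} M⁻¹) u₁^{∓1} = (M u₁^{±1} M⁻¹) u₁^{∓1} a₂`. Since `a_j` commutes with `y` for `j ≥ 3`,
`M u₁ M⁻¹ = a₂ a₁ a₂ y a₂⁻¹ a₁⁻¹`, and the twist relation `a₁ y = y a₁⁻¹` turns the product
`(M u₁^{±1} M⁻¹) u₁^{∓1}` into `P (y^{∓1} a₂ y^{±1})⁻¹` with `P = a₁ a₂ a₁`. As `P` conjugates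
`a₂` to `a₁`, the relation collapses to `a₂` commuting with `y^{∓1} a₂ y^{±1}`, which is (C2')
up to conjugation by `y`.
-/

section Braid

variable {G : Type*} [Group G] {b c y : G}

theorem mul_braid_eq_braid_mul_s13 (hb : b * c * b = c * b * c) : b * (b * c * b) = b * c * b * c :=
  calc b * (b * c * b) = b * (c * b * c) := by rw [hb]
    _ = b * c * b * c := by group

theorem mul_mul_mul_eq_iff_commute {P X : G} (h : b * P = P * c) :
    b * (P * X) = P * X * c ↔ Commute c X := by
  rw [← mul_assoc, h, mul_assoc, mul_assoc, mul_right_inj]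
  rfl

theorem commute_conj_inv_iff_commute_conj : Commute c (y⁻¹ * c * y) ↔ Commute c (y * c * y⁻¹) := by
  rw [← Commute.conj_iff y, show y * (y⁻¹ * c * y) * y⁻¹ = c by group]
  exact ⟨Commute.symm, Commute.symm⟩

theorem inv_twist_mul_eq (hb : b * c * b = c * b * c) (hy : b * y = y * b⁻¹) :
    (c * b * c * y * c⁻¹ * b⁻¹)⁻¹ * (b * y) = b * c * b * (y⁻¹ * c * y)⁻¹ :=
  calc (c * b * c * y * c⁻¹ * b⁻¹)⁻¹ * (b * y) = b * c * y⁻¹ * (c * b * c)⁻¹ * (b * y) := by group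
    _ = b * c * (b * y)⁻¹ * (c⁻¹ * y) := by rw [← hb]; group
    _ = b * c * b * (y⁻¹ * c * y)⁻¹ := by rw [hy]; group

theorem twist_mul_inv_eq (hb : b * c * b = c * b * c) (hy : b * y = y * b⁻¹) :
    c * b * c * y * c⁻¹ * b⁻¹ * (b * y)⁻¹ = b * c * b * (y * c * y⁻¹)⁻¹ := by
  rw [hy, hb]
  group

theorem mul_inv_twist_mul_eq_iff (hb : b * c * b = c * b * c) (hy : b * y = y * b⁻¹) :
    b * (c * b * c * y * c⁻¹ * b⁻¹)⁻¹ * (b * y) = (c * b * c * y * c⁻¹ * b⁻¹)⁻¹ * (b * y) * c ↔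
      Commute c (y * c * y⁻¹) := by
  rw [mul_assoc b, inv_twist_mul_eq hb hy, mul_mul_mul_eq_iff_commute (mul_braid_eq_braid_mul_s13 hb),
    Commute.inv_right_iff, commute_conj_inv_iff_commute_conj]

theorem mul_twist_mul_inv_eq_iff (hb : b * c * b = c * b * c) (hy : b * y = y * b⁻¹) :
    b * (c * b * c * y * c⁻¹ * b⁻¹) * (b * y)⁻¹ = c * b * c * y * c⁻¹ * b⁻¹ * (b * y)⁻¹ * c ↔
      Commute c (y * c * y⁻¹) := by
  rw [mul_assoc b, twist_mul_inv_eq hb hy, mul_mul_mul_eq_iff_commute (mul_braid_eq_braid_mul_s13 hb),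
    Commute.inv_right_iff]

theorem conj_relation_iff {N p q p' q' X Z : G} (hp : N * p = p' * N) (hq : N * q = q' * N) :
    p' * (N * X * N⁻¹) * (N * Z * N⁻¹) = N * X * N⁻¹ * (N * Z * N⁻¹) * q' ↔
      p * X * Z = X * Z * q := by
  conv_rhs => rw [← (MulAut.conj N).injective.eq_iff]
  simp only [map_mul, MulAut.conj_apply]
  rw [mul_inv_eq_of_eq_mul hp, mul_inv_eq_of_eq_mul hq]

end Braid

section Shift

variable {G : Type*} [Group G] (a : ℕ → G) {n : ℕ}

theorem commute_prod_range'_map {x : G} {s k : ℕ} (h : ∀ m, s ≤ m → m < s + k → Commute x (a m)) :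
    Commute x ((List.range' s k).map a).prod := by
  refine Commute.list_prod_right _ _ fun z hz => ?_
  obtain ⟨m, hm, rfl⟩ := List.mem_map.mp hz
  exact h m (List.mem_range'_1.mp hm).1 (List.mem_range'_1.mp hm).2

theorem prod_range'_mul_eq_mul_prod_range'
    (hcomm : ∀ i j, 1 ≤ i → j ≤ n → i + 1 < j → a i * a j = a j * a i)
    (hbraid : ∀ i, 1 ≤ i → i + 1 ≤ n → a i * a (i + 1) * a i = a (i + 1) * a i * a (i + 1))
    {j : ℕ} (hj : 1 ≤ j) (hjn : j + 1 ≤ n) :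
    ((List.range' 1 n).map a).prod * a j = a (j + 1) * ((List.range' 1 n).map a).prod := by
  set P := ((List.range' 1 (j - 1)).map a).prod
  set S := ((List.range' (j + 2) (n - j - 1)).map a).prod
  have hsplit : ((List.range' 1 n).map a).prod = P * (a j * (a (j + 1) * S)) := by
    rw [show n = (j - 1) + ((n - j - 1) + 1 + 1) by omega, ← List.range'_append, List.range'_succ,
      List.range'_succ]
    simp only [List.map_append, List.map_cons, List.prod_append, List.prod_cons, one_mul,
      show 1 + (j - 1) = j by omega]
    rfl
  have hS : Commute (a j) S :=
    commute_prod_range'_map a fun m hm hmn => hcomm j m hj (by omega) (by omega)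
  have hP : Commute (a (j + 1)) P :=
    commute_prod_range'_map a fun m hm hmn => (hcomm m (j + 1) hm hjn (by omega)).symm
  rw [hsplit]
  calc P * (a j * (a (j + 1) * S)) * a j = P * (a j * a (j + 1) * (S * a j)) := by group
    _ = P * (a j * a (j + 1) * a j) * S := by rw [← hS.eq]; group
    _ = P * a (j + 1) * (a j * (a (j + 1) * S)) := by rw [hbraid j hj hjn]; group
    _ = a (j + 1) * (P * (a j * (a (j + 1) * S))) := by rw [← hP.eq]; group

theorem pow_prod_range'_mul_eq_mul_pow
    (hcomm : ∀ i j, 1 ≤ i → j ≤ n → i + 1 < j → a i * a j = a j * a i)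
    (hbraid : ∀ i, 1 ≤ i → i + 1 ≤ n → a i * a (i + 1) * a i = a (i + 1) * a i * a (i + 1))
    (k : ℕ) {j : ℕ} (hj : 1 ≤ j) (hjn : k + j ≤ n) :
    ((List.range' 1 n).map a).prod ^ k * a j = a (k + j) * ((List.range' 1 n).map a).prod ^ k := by
  induction k generalizing j with
  | zero => simp
  | succ k ih =>
    rw [pow_succ, mul_assoc, prod_range'_mul_eq_mul_prod_range' a hcomm hbraid hj (by omega),
      ← mul_assoc, ih (by omega) (by omega), mul_assoc, ← pow_succ, Nat.add_right_comm k 1 j, Nat.add_assoc]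

theorem prod_range'_mul_eq_conj_mul_prod_range' {y : G}
    (hy : ∀ i, 3 ≤ i → i ≤ n → a i * y = y * a i) (hn : 2 ≤ n) :
    ((List.range' 1 n).map a).prod * y =
      a 1 * a 2 * y * (a 2)⁻¹ * (a 1)⁻¹ * ((List.range' 1 n).map a).prod := by
  obtain ⟨m, rfl⟩ : ∃ m, n = m + 2 := ⟨n - 2, by omega⟩
  have hT : Commute y ((List.range' 3 m).map a).prod :=
    commute_prod_range'_map a fun i hi him => (hy i hi (by omega)).symm
  simp only [List.range'_succ, List.map_cons, List.prod_cons]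
  rw [mul_assoc, mul_assoc, ← hT.eq]
  group

end Shift

/-- after the substitutions `u₁ = a₁ y` and
`uᵢ = M^(i-1) u₁^((-1)^(i-1)) M^(-(i-1))`, each relation of the family (C2)
is equivalent to relation (C2'). -/
theorem stmt_13 {G : Type*} [Group G] (g : ℕ) (hg : 3 ≤ g) (a : ℕ → G) (y : G)
    (hA1 : ∀ i j, 1 ≤ i → j ≤ g - 1 → i + 1 < j → a i * a j = a j * a i)
    (hA2 : ∀ i, 1 ≤ i → i ≤ g - 2 → a i * a (i + 1) * a i = a (i + 1) * a i * a (i + 1))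
    (hC1' : ∀ i, 3 ≤ i → i ≤ g - 1 → a i * y = y * a i)
    (hC4' : a 1 * y = y * (a 1)⁻¹)
    (M u1 : G) (u : ℕ → G)
    (hM : M = ((List.range' 1 (g - 1)).map a).prod)
    (hu1 : u1 = a 1 * y)
    (hu : ∀ i, 1 ≤ i → i ≤ g - 1 → u i = M ^ (i - 1) * u1 ^ ((-1 : ℤ) ^ (i - 1)) * (M ^ (i - 1))⁻¹) :
    ∀ i, 1 ≤ i → i ≤ g - 2 →
      (a i * u (i + 1) * u i = u (i + 1) * u i * a (i + 1) ↔
        a 2 * (y * a 2 * y⁻¹) = (y * a 2 * y⁻¹) * a 2) := by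
  intro i hi hig
  obtain ⟨k, rfl⟩ : ∃ k, i = k + 1 := ⟨i - 1, by omega⟩
  have hbraid : ∀ i, 1 ≤ i → i + 1 ≤ g - 1 → a i * a (i + 1) * a i = a (i + 1) * a i * a (i + 1) :=
    fun i hi hin => hA2 i hi (by omega)
  have hshift := hM ▸ pow_prod_range'_mul_eq_mul_pow a hA1 hbraid
  have hMu1 : M * u1 * M⁻¹ = a 2 * a 1 * a 2 * y * (a 2)⁻¹ * (a 1)⁻¹ := by
    have hMa1 : M * a 1 = a 2 * M := by simpa using hshift 1 le_rfl (by omega)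
    rw [hu1, ← mul_assoc, hMa1, mul_assoc (a 2), hM,
      prod_range'_mul_eq_conj_mul_prod_range' a hC1' (by omega), ← hM]
    group
  have hconj : ∀ x, M ^ (k + 1) * x * (M ^ (k + 1))⁻¹ = M ^ k * (M * x * M⁻¹) * (M ^ k)⁻¹ :=
    fun x => by group
  have ha1 : M ^ k * a 1 = a (k + 1) * M ^ k := hshift k le_rfl (by omega)
  have ha2 : M ^ k * a 2 = a (k + 1 + 1) * M ^ k := hshift k (by norm_num) (by omega)
  rw [hu (k + 1 + 1) (by omega) (by omega), hu (k + 1) le_add_self (by omega),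
    Nat.add_sub_cancel, Nat.add_sub_cancel, hconj, conj_relation_iff ha1 ha2, ← conj_zpow,
    hMu1, hu1]
  have hb : a 1 * a 2 * a 1 = a 2 * a 1 * a 2 := hbraid 1 le_rfl (by omega)
  rcases Nat.even_or_odd k with hk | hk <;>
    rw [hk.neg_one_pow, hk.add_one.neg_one_pow, zpow_one, zpow_neg_one]
  exacts [mul_inv_twist_mul_eq_iff hb hC4', mul_twist_mul_inv_eq_iff hb hC4']
end

section
/- Let G be a group, let g ≥ 2, and let a_1,…,a_{g−1}, u_1,…,u_{g−1}, ρ be elements of G satisfying: ρ = a_1 a_2 ⋯ a_{g−1} u_{g−1} ⋯ u_2 u_1; ρ a_i ρ^{−1} = a_i for i = 1,…,g−1; and ρ u_i ρ^{−1} = u_i^{−1} for i = 1,…,g−1. Then (u_1 u_2 ⋯ u_{g−1})(u_{g−1} ⋯ u_2 u_1) = 1. -/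
/-!
Write `ρ = A * V` with `A = a₁⋯a_{g-1}` and `V = u_{g-1}⋯u₁`, and let `U = u₁⋯u_{g-1}`.
Since `ρ` commutes with `A` and with itself, it commutes with `V = A⁻¹ρ`; on the other hand
conjugation by `ρ` inverts every `uᵢ`, so it sends `V` to `U⁻¹`. Hence `V = U⁻¹`.
-/

section

variable {G : Type*} [Group G]

lemma commute_of_mul_mul_inv_eq {ρ x : G} (h : ρ * x * ρ⁻¹ = x) : Commute ρ x :=
  mul_inv_eq_iff_eq_mul.mp h

lemma Commute.right_of_eq_mul {ρ x y : G} (hρ : ρ = x * y) (hx : Commute ρ x) :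
    Commute ρ y := by
  have hy : y = x⁻¹ * ρ := by rw [hρ, inv_mul_cancel_left]
  exact hy ▸ hx.inv_right.mul_right (Commute.refl ρ)

lemma conj_prod_reverse_of_forall_conj_eq_inv {ρ : G} {l : List G}
    (h : ∀ x ∈ l, ρ * x * ρ⁻¹ = x⁻¹) : ρ * l.reverse.prod * ρ⁻¹ = l.prod⁻¹ := by
  induction l with
  | nil => simp
  | cons x t ih =>
    have hx := h x List.mem_cons_self
    have ht := ih fun y hy => h y (List.mem_cons_of_mem x hy)
    calc ρ * (x :: t).reverse.prod * ρ⁻¹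
        = (ρ * t.reverse.prod * ρ⁻¹) * (ρ * x * ρ⁻¹) := by
          rw [List.reverse_cons, List.prod_append, List.prod_singleton]
          group
      _ = (x :: t).prod⁻¹ := by rw [ht, hx, List.prod_cons, mul_inv_rev]

end

theorem stmt_17_general {G : Type*} [Group G] (g : ℕ) (a u : ℕ → G) (ρ : G)
    (hρ : ρ = ((List.range' 1 (g - 1)).map a).prod *
        (((List.range' 1 (g - 1)).reverse.map u).prod))
    (ha : ∀ i, 1 ≤ i → i ≤ g - 1 → ρ * a i * ρ⁻¹ = a i)
    (hu : ∀ i, 1 ≤ i → i ≤ g - 1 → ρ * u i * ρ⁻¹ = (u i)⁻¹) :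
    ((List.range' 1 (g - 1)).map u).prod * ((List.range' 1 (g - 1)).reverse.map u).prod = 1 := by
  set L := List.range' 1 (g - 1)
  have hL : ∀ i ∈ L, 1 ≤ i ∧ i ≤ g - 1 := fun i hi => by
    rw [List.mem_range'_1] at hi
    omega
  have hA : Commute ρ (L.map a).prod := Commute.list_prod_right _ _ <| by
    simp only [List.mem_map]
    rintro _ ⟨i, hi, rfl⟩
    exact commute_of_mul_mul_inv_eq (ha i (hL i hi).1 (hL i hi).2)
  have hV : ρ * (L.reverse.map u).prod * ρ⁻¹ = (L.map u).prod⁻¹ := by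
    rw [List.map_reverse]
    refine conj_prod_reverse_of_forall_conj_eq_inv ?_
    simp only [List.mem_map]
    rintro _ ⟨i, hi, rfl⟩
    exact hu i (hL i hi).1 (hL i hi).2
  rw [(hA.right_of_eq_mul hρ).eq, mul_inv_cancel_right] at hV
  rw [hV, mul_inv_cancel]

/-- if `ρ = a₁⋯a_{g-1} u_{g-1}⋯u₁`, `ρ` commutes with every `aᵢ`, and
`ρ` inverts every `uᵢ` under conjugation, then `(u₁⋯u_{g-1})(u_{g-1}⋯u₁) = 1`. -/
theorem stmt_17 {G : Type*} [Group G] (g : ℕ) (hg : 2 ≤ g) (a u : ℕ → G) (ρ : G)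
    (hρ : ρ = ((List.range' 1 (g - 1)).map a).prod *
        (((List.range' 1 (g - 1)).reverse.map u).prod))
    (ha : ∀ i, 1 ≤ i → i ≤ g - 1 → ρ * a i * ρ⁻¹ = a i)
    (hu : ∀ i, 1 ≤ i → i ≤ g - 1 → ρ * u i * ρ⁻¹ = (u i)⁻¹) :
    ((List.range' 1 (g - 1)).map u).prod * ((List.range' 1 (g - 1)).reverse.map u).prod = 1 :=
  stmt_17_general g a u ρ hρ ha hu
end

section
/- Let G be a group, let g ≥ 3, and let y, ρ, a_2,…,a_{g−1} be elements of G satisfying: ρ a_i = a_i ρ for i = 2,…,g−1; y ρ = ρ y^{−1}; and ρ² = 1. Set A = a_2 a_3 ⋯ a_{g−1}. Then: (i) if g is odd, the relation (y^{−1} A y A)^{(g−1)/2} = 1 holds if and only if (y ρ A)^{g−1} = 1; and (ii) if g is even, the relation (y^{−1} A y A)^{(g−2)/2} y^{−1} A = ρ holds if and only if (y ρ A)^{g−1} = 1. -/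
/-!
With `x = y ρ A` and `w = y⁻¹ A y A`, the relations `ρ A = A ρ`, `ρ y = y⁻¹ ρ` and `ρ² = 1` give
`x² = y A y⁻¹ A = (y A) w (y A)⁻¹`. Hence `x^(2m)` is conjugate to `w^m`, which settles odd `g`,
and `x^(2m+1) = (y A) w^m ρ`, which for even `g` is `1` exactly when `w^m y⁻¹ A = ρ`.
-/

section

variable {G : Type*} [Group G] {y ρ A : G}

theorem mul_eq_inv_mul_of_mul_eq_mul_inv_s18 (hyρ : y * ρ = ρ * y⁻¹) : ρ * y = y⁻¹ * ρ :=
  calc ρ * y = y⁻¹ * (y * ρ) * y := by group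
    _ = y⁻¹ * ρ := by rw [hyρ]; group

theorem mul_mul_sq_eq_conj (hρA : Commute ρ A) (hyρ : y * ρ = ρ * y⁻¹) (hρ : ρ ^ 2 = 1) :
    (y * ρ * A) ^ 2 = (y * A) * (y⁻¹ * A * y * A) * (y * A)⁻¹ :=
  calc (y * ρ * A) ^ 2 = y * (ρ * A) * y * ρ * A := by rw [sq]; simp only [mul_assoc]
    _ = y * A * (ρ * y) * ρ * A := by rw [hρA.eq]; simp only [mul_assoc]
    _ = y * A * y⁻¹ * ρ ^ 2 * A := by
      rw [mul_eq_inv_mul_of_mul_eq_mul_inv_s18 hyρ, sq]; simp only [mul_assoc]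
    _ = (y * A) * (y⁻¹ * A * y * A) * (y * A)⁻¹ := by rw [hρ]; group

theorem mul_mul_pow_two_mul_eq_conj (hρA : Commute ρ A) (hyρ : y * ρ = ρ * y⁻¹)
    (hρ : ρ ^ 2 = 1) (m : ℕ) :
    (y * ρ * A) ^ (2 * m) = (y * A) * (y⁻¹ * A * y * A) ^ m * (y * A)⁻¹ := by
  rw [pow_mul, mul_mul_sq_eq_conj hρA hyρ hρ, conj_pow]

theorem mul_mul_pow_two_mul_add_one (hρA : Commute ρ A) (hyρ : y * ρ = ρ * y⁻¹)
    (hρ : ρ ^ 2 = 1) (m : ℕ) :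
    (y * ρ * A) ^ (2 * m + 1) = y * A * (y⁻¹ * A * y * A) ^ m * ρ :=
  calc (y * ρ * A) ^ (2 * m + 1)
      = y * A * (y⁻¹ * A * y * A) ^ m * (A⁻¹ * (ρ * A)) := by
        rw [pow_succ, mul_mul_pow_two_mul_eq_conj hρA hyρ hρ]; group
    _ = y * A * (y⁻¹ * A * y * A) ^ m * ρ := by rw [hρA.eq, inv_mul_cancel_left]

theorem pow_eq_one_iff_mul_mul_pow_two_mul_eq_one (hρA : Commute ρ A)
    (hyρ : y * ρ = ρ * y⁻¹) (hρ : ρ ^ 2 = 1) (m : ℕ) :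
    (y⁻¹ * A * y * A) ^ m = 1 ↔ (y * ρ * A) ^ (2 * m) = 1 := by
  rw [mul_mul_pow_two_mul_eq_conj hρA hyρ hρ, conj_eq_one_iff]

theorem pow_mul_inv_mul_eq_iff_mul_mul_pow_two_mul_add_one_eq_one (hρA : Commute ρ A)
    (hyρ : y * ρ = ρ * y⁻¹) (hρ : ρ ^ 2 = 1) (m : ℕ) :
    (y⁻¹ * A * y * A) ^ m * y⁻¹ * A = ρ ↔ (y * ρ * A) ^ (2 * m + 1) = 1 := by
  have hρy : ρ * (y * A) = y⁻¹ * A * ρ := by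
    rw [← mul_assoc, mul_eq_inv_mul_of_mul_eq_mul_inv_s18 hyρ, mul_assoc, hρA.eq, mul_assoc]
  have hρinv : ρ⁻¹ = ρ := inv_eq_of_mul_eq_one_right (by rw [← sq, hρ])
  set w := y⁻¹ * A * y * A
  rw [mul_mul_pow_two_mul_add_one hρA hyρ hρ, mul_assoc (y * A), mul_eq_one_comm,
    mul_assoc _ ρ, hρy, ← mul_assoc, ← mul_assoc, mul_eq_one_iff_eq_inv, hρinv]

end

/-- relations (Fa) (for `g` odd) and (Fb) (for `g` even) are each
equivalent to relation (F') `(yρa₂⋯a_{g-1})^(g-1) = 1`. -/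
theorem stmt_18 {G : Type*} [Group G] (g : ℕ) (hg : 3 ≤ g) (a : ℕ → G) (y ρ : G)
    (hρa : ∀ i, 2 ≤ i → i ≤ g - 1 → ρ * a i = a i * ρ)
    (hyρ : y * ρ = ρ * y⁻¹)
    (hρ2 : ρ ^ 2 = 1)
    (A : G) (hA : A = ((List.range' 2 (g - 2)).map a).prod) :
    (Odd g → ((y⁻¹ * A * y * A) ^ ((g - 1) / 2) = 1 ↔ (y * ρ * A) ^ (g - 1) = 1)) ∧
    (Even g → ((y⁻¹ * A * y * A) ^ ((g - 2) / 2) * y⁻¹ * A = ρ ↔ (y * ρ * A) ^ (g - 1) = 1)) := by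
  have hρA : Commute ρ A := by
    subst hA
    refine Commute.list_prod_right _ _ fun x hx => ?_
    obtain ⟨i, hi, rfl⟩ := List.mem_map.mp hx
    rw [List.mem_range'_1] at hi
    exact hρa i hi.1 (by omega)
  constructor
  · rintro ⟨m, rfl⟩
    rw [show (2 * m + 1 - 1) / 2 = m by omega, show 2 * m + 1 - 1 = 2 * m by omega]
    exact pow_eq_one_iff_mul_mul_pow_two_mul_eq_one hρA hyρ hρ2 m
  · rintro ⟨m, rfl⟩
    rw [show (m + m - 2) / 2 = m - 1 by omega, show m + m - 1 = 2 * (m - 1) + 1 by omega]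
    exact pow_mul_inv_mul_eq_iff_mul_mul_pow_two_mul_add_one_eq_one hρA hyρ hρ2 (m - 1)
end

section
/- Let G be a group and let a_1, a_2, y be elements of G satisfying: a_1 a_2 a_1 = a_2 a_1 a_2; a_2 (y a_2 y^{−1}) = (y a_2 y^{−1}) a_2; and a_1 y = y a_1^{−1}. Then relation (B2') y(a_2 a_1 y^{−1} a_2^{−1} y a_1 a_2)y = a_1(a_2 a_1 y^{−1} a_2^{−1} y a_1 a_2)a_1 holds if and only if (a_1 a_2 y^{−1} a_2^{−1} a_1^{−1})(a_2^{−1} y a_2) y = y^{−1} (a_1 a_2 y^{−1} a_2^{−1} a_1^{−1})(a_2^{−1} y a_2). -/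
/-! Write `P = (a₁a₂y⁻¹a₂⁻¹a₁⁻¹)(a₂⁻¹ya₂)` and `W = a₂a₁y⁻¹a₂⁻¹ya₁a₂`. The inverted braid relation
and `y⁻¹a₁y = a₁⁻¹` give `P = a₁a₂a₁ (y⁻¹a₂⁻¹y) a₁a₂`. From this, the braid relation together with
(C2') yields `W a₁ = P`, and `a₁ya₁ = y` yields `y W = a₁ y P`. Hence (B2'), `y W y = a₁ W a₁`, reads
`a₁ (y P y) = a₁ P`, that is `P y = y⁻¹ P`. -/

section

variable {G : Type*} [Group G]

theorem inv_mul_inv_mul_inv_of_braid {a b : G} (h : a * b * a = b * a * b) :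
    a⁻¹ * b⁻¹ * a⁻¹ = b⁻¹ * a⁻¹ * b⁻¹ := by
  simpa only [mul_inv_rev, mul_assoc] using congrArg (·⁻¹) h

theorem conj_inv_mul_mul_inv_of_mul_eq_mul_inv {a y : G} (h : a * y = y * a⁻¹) (g : G) :
    y⁻¹ * (a⁻¹ * g * a⁻¹) * y = a * (y⁻¹ * g * y) * a := by
  have left : y⁻¹ * a⁻¹ = a * y⁻¹ := by
    simpa only [mul_inv_rev, inv_inv] using congrArg (·⁻¹) h
  have right : a⁻¹ * y = y * a := by
    simpa only [mul_assoc, inv_mul_cancel, mul_one, inv_mul_cancel_left] using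
      congrArg (a⁻¹ * · * a) h.symm
  calc y⁻¹ * (a⁻¹ * g * a⁻¹) * y = (y⁻¹ * a⁻¹) * g * (a⁻¹ * y) := by group
    _ = a * (y⁻¹ * g * y) * a := by rw [left, right]; group

theorem Commute.conj_inv_right_of_conj_right {a y : G} (h : Commute a (y * a * y⁻¹)) :
    Commute a (y⁻¹ * a⁻¹ * y) := by
  simpa [mul_assoc] using (h.symm.conj y⁻¹).inv_right

end

/-- geometric reformulation of relation (B2'): it is equivalent to the
statement that `(a₁a₂y⁻¹a₂⁻¹a₁⁻¹)(a₂⁻¹ya₂)` conjugates `y` to `y⁻¹`. -/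
theorem stmt_19 {G : Type*} [Group G] (a1 a2 y : G)
    (h12 : a1 * a2 * a1 = a2 * a1 * a2)
    (hC2' : a2 * (y * a2 * y⁻¹) = (y * a2 * y⁻¹) * a2)
    (h1y : a1 * y = y * a1⁻¹) :
    (y * (a2 * a1 * y⁻¹ * a2⁻¹ * y * a1 * a2) * y =
        a1 * (a2 * a1 * y⁻¹ * a2⁻¹ * y * a1 * a2) * a1 ↔
      (a1 * a2 * y⁻¹ * a2⁻¹ * a1⁻¹) * (a2⁻¹ * y * a2) * y =
        y⁻¹ * ((a1 * a2 * y⁻¹ * a2⁻¹ * a1⁻¹) * (a2⁻¹ * y * a2))) := by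
  set W := a2 * a1 * y⁻¹ * a2⁻¹ * y * a1 * a2 with hW
  set P := (a1 * a2 * y⁻¹ * a2⁻¹ * a1⁻¹) * (a2⁻¹ * y * a2) with hP
  have hP' : P = a1 * a2 * a1 * (y⁻¹ * a2⁻¹ * y) * a1 * a2 := by
    calc P = a1 * a2 * (y⁻¹ * (a2⁻¹ * a1⁻¹ * a2⁻¹) * y) * a2 := by rw [hP]; group
      _ = a1 * a2 * a1 * (y⁻¹ * a2⁻¹ * y) * a1 * a2 := by
        rw [← inv_mul_inv_mul_inv_of_braid h12, conj_inv_mul_mul_inv_of_mul_eq_mul_inv h1y]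
        group
  have hWP : W * a1 = P := by
    rw [hP', h12]
    calc W * a1 = a2 * a1 * (y⁻¹ * a2⁻¹ * y) * (a2 * a1 * a2) := by rw [hW, ← h12]; group
      _ = a2 * a1 * (a2 * (y⁻¹ * a2⁻¹ * y)) * a1 * a2 := by
        rw [(Commute.conj_inv_right_of_conj_right hC2').eq]; group
      _ = a2 * a1 * a2 * (y⁻¹ * a2⁻¹ * y) * a1 * a2 := by group
  have hyW : y * W = a1 * y * P := by
    have hflip : a1 * y * a1 = y := by rw [h1y, inv_mul_cancel_right]
    calc y * W = a1 * y * a1 * a2 * a1 * (y⁻¹ * a2⁻¹ * y) * a1 * a2 := by rw [hflip, hW]; group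
      _ = a1 * y * P := by rw [hP']; group
  have hlhs : y * W * y = a1 * (y * P * y) := by rw [hyW]; group
  have hrhs : a1 * W * a1 = a1 * P := by rw [mul_assoc, hWP]
  rw [hlhs, hrhs, mul_right_inj, eq_inv_mul_iff_mul_eq, mul_assoc]
end
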